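/- arXiv:1803.07127 — 6 statements merged into one kernel-verified Lean document; each statement's English description precedes it below -/
import Mathlib

section
/- Let a > 0, γ ∈ [0,1), b ∈ (0,1), and x̄ > 0. Let T = (x̄^{1−γ} − (b x̄)^{1−γ})/(a(1−γ)) be the time needed for the solution of dx/dt = a x^{γ} started at b x̄ to reach x̄, and let x(t) = ((b x̄)^{1−γ} + a(1−γ)t)^{1/(1−γ)} for t ∈ [0,T]. Then the time average of the rate over one cycle satisfies (1/T)·∫₀^T x(t) dt = x̄ · (1−b^{2−γ})(1−γ) / ((2−γ)(1−b^{1−γ})). -/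
/-!
In the variable `u = x ^ (1 - γ)` the increase phase is linear, `u(t) = (b x̄) ^ (1 - γ) + a (1 - γ) t`,
so the integral of `x = u ^ (1 / (1 - γ))` over a cycle is an elementary power integral. Both
endpoint terms are homogeneous in `x̄`, and the quotient reduces to `x̄` times a function of `b`, `γ`.
-/

open intervalIntegral

theorem integral_rpow_affine {u₀ k r T : ℝ} (hk : k ≠ 0) (hr : -1 < r) :
    ∫ t in (0 : ℝ)..T, (u₀ + k * t) ^ r
      = ((u₀ + k * T) ^ (r + 1) - u₀ ^ (r + 1)) / (k * (r + 1)) := by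
  rw [integral_comp_add_mul (fun u => u ^ r) hk, integral_rpow (Or.inl hr), mul_zero, add_zero,
    smul_eq_mul]
  field_simp

theorem Real.rpow_rpow_one_div_add_one {x p : ℝ} (hx : 0 ≤ x) (hp : p ≠ 0) :
    (x ^ p) ^ (1 / p + 1) = x ^ (1 + p) := by
  rw [← Real.rpow_mul hx]
  congr 1
  field_simp

/-- Time average of `t ↦ (x₀ ^ p + a p t) ^ (1 / p)`, the solution of `dx/dt = a x ^ (1 - p)`
started at `x₀`, over the time `T` it takes to reach `x₁`. -/
theorem average_power_growth {a p x₀ x₁ T : ℝ} (ha : a ≠ 0) (hp : 0 < p)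
    (hx₀ : 0 ≤ x₀) (hx₁ : 0 ≤ x₁) (hT : T = (x₁ ^ p - x₀ ^ p) / (a * p)) :
    (1 / T) * ∫ t in (0 : ℝ)..T, (x₀ ^ p + a * p * t) ^ (1 / p)
      = p * (x₁ ^ (1 + p) - x₀ ^ (1 + p)) / ((1 + p) * (x₁ ^ p - x₀ ^ p)) := by
  have hap : a * p ≠ 0 := mul_ne_zero ha hp.ne'
  have hend : x₀ ^ p + a * p * T = x₁ ^ p := by
    rw [hT]; field_simp; ring
  rw [integral_rpow_affine hap (by linarith [one_div_pos.mpr hp]), hend,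
    Real.rpow_rpow_one_div_add_one hx₁ hp.ne', Real.rpow_rpow_one_div_add_one hx₀ hp.ne', hT]
  field_simp

/-- Under the threshold policy with threshold `x̄`, the G-AIMD rate grows from
`b x̄` following `dx/dt = a xᵞ` until it reaches `x̄` at time
`T = (x̄^(1-γ) - (b x̄)^(1-γ))/(a(1-γ))`.  The time average of the rate over one
cycle equals `x̄ (1-b^(2-γ))(1-γ) / ((2-γ)(1-b^(1-γ)))`. -/
theorem gaimd_cycle_average_throughput
    (a γ b xbar : ℝ) (ha : 0 < a) (hγ : γ ∈ Set.Ico (0 : ℝ) 1)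
    (hb : b ∈ Set.Ioo (0 : ℝ) 1) (hxbar : 0 < xbar)
    (T : ℝ) (hT : T = (xbar ^ (1 - γ) - (b * xbar) ^ (1 - γ)) / (a * (1 - γ)))
    (x : ℝ → ℝ)
    (hx : ∀ t : ℝ, x t = ((b * xbar) ^ (1 - γ) + a * (1 - γ) * t) ^ (1 / (1 - γ))) :
    (1 / T) * ∫ t in (0 : ℝ)..T, x t
      = xbar * ((1 - b ^ (2 - γ)) * (1 - γ)) / ((2 - γ) * (1 - b ^ (1 - γ))) := by
  obtain ⟨-, hγ1⟩ := hγ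
  obtain ⟨hb0, -⟩ := hb
  have hp : 0 < 1 - γ := sub_pos.mpr hγ1
  rw [integral_congr fun t _ => hx t,
    average_power_growth ha.ne' hp (mul_nonneg hb0.le hxbar.le) hxbar.le hT,
    Real.mul_rpow hb0.le hxbar.le, Real.mul_rpow hb0.le hxbar.le,
    Real.rpow_add hxbar, Real.rpow_one, show (1 : ℝ) + (1 - γ) = 2 - γ by ring]
  field_simp
end

section
/- Let a > 0, γ ∈ [0,1), b ∈ (0,1), α > 0 with α ≠ 1 and 2−α−γ ≠ 0, and x̄ > 0. Let T = (x̄^{1−γ} − (b x̄)^{1−γ})/(a(1−γ)) and x(t) = ((b x̄)^{1−γ} + a(1−γ)t)^{1/(1−γ)} for t ∈ [0,T]. Then (1/T)·∫₀^T x(t)^{1−α}/(1−α) dt = x̄^{1−α} · (1−b^{2−α−γ})(1−γ) / ((1−α)(2−α−γ)(1−b^{1−γ})). -/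
/-!
On the increase phase `dt = dx / (a x^γ)`, so the time integral of `x^(1-α)` over one cycle is
`∫ x in b x̄..x̄, x^(1-α-γ) / a`, which is elementary; dividing by the cycle length `T` gives the
formula. Formally we substitute `u = x^(1-γ)`, which is affine in `t`.
-/

open intervalIntegral Set

theorem integral_rpow_one_div_rpow {s p u₀ u₁ : ℝ} (hu₀ : 0 < u₀) (hu₁ : 0 < u₁)
    (hp : p / s ≠ -1) :
    ∫ u in u₀..u₁, (u ^ (1 / s)) ^ p = (u₁ ^ (p / s + 1) - u₀ ^ (p / s + 1)) / (p / s + 1) := by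
  have hpos : ∀ u ∈ uIcc u₀ u₁, 0 < u := fun u hu => (lt_min hu₀ hu₁).trans_le hu.1
  rw [integral_congr (g := fun u => u ^ (p / s)) fun u hu => by
      simp only [← Real.rpow_mul (hpos u hu).le, one_div_mul_eq_div]]
  exact integral_rpow (Or.inr ⟨hp, fun h => (hpos 0 h).false⟩)

theorem integral_rpow_gaimd_trajectory {a s p y₀ y₁ : ℝ} (ha : a ≠ 0) (hs : s ≠ 0)
    (hy₀ : 0 < y₀) (hy₁ : 0 < y₁) (hps : p + s ≠ 0) :
    ∫ t in (0 : ℝ)..(y₁ ^ s - y₀ ^ s) / (a * s), ((y₀ ^ s + a * s * t) ^ (1 / s)) ^ p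
      = (y₁ ^ (p + s) - y₀ ^ (p + s)) / (a * (p + s)) := by
  have has : a * s ≠ 0 := mul_ne_zero ha hs
  have hexp : p / s + 1 = (p + s) / s := by field_simp
  have hexp_ne : p / s ≠ -1 := by
    intro h
    apply div_ne_zero hps hs
    rw [← hexp, h]
    norm_num
  have hpow : ∀ {y : ℝ}, 0 < y → (y ^ s) ^ (p / s + 1) = y ^ (p + s) := fun hy => by
    rw [← Real.rpow_mul hy.le, hexp, mul_div_cancel₀ _ hs]
  have hsubst := integral_comp_mul_add (fun u => (u ^ (1 / s)) ^ p) has (y₀ ^ s)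
    (a := 0) (b := (y₁ ^ s - y₀ ^ s) / (a * s))
  rw [mul_zero, zero_add, mul_div_cancel₀ _ has, sub_add_cancel] at hsubst
  simp_rw [add_comm (y₀ ^ s)]
  rw [hsubst, integral_rpow_one_div_rpow (Real.rpow_pos_of_pos hy₀ s)
      (Real.rpow_pos_of_pos hy₁ s) hexp_ne, hpow hy₀, hpow hy₁, hexp, smul_eq_mul]
  field_simp

theorem gaimd_cycle_average_fairness_general
    (a γ b α xbar : ℝ) (ha : 0 < a) (hγ : γ ∈ Set.Ico (0 : ℝ) 1)
    (hb : b ∈ Set.Ioo (0 : ℝ) 1)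
    (hαγ : 2 - α - γ ≠ 0) (hxbar : 0 < xbar)
    (T : ℝ) (hT : T = (xbar ^ (1 - γ) - (b * xbar) ^ (1 - γ)) / (a * (1 - γ)))
    (x : ℝ → ℝ)
    (hx : ∀ t : ℝ, x t = ((b * xbar) ^ (1 - γ) + a * (1 - γ) * t) ^ (1 / (1 - γ))) :
    (1 / T) * ∫ t in (0 : ℝ)..T, (x t) ^ (1 - α) / (1 - α)
      = xbar ^ (1 - α) * ((1 - b ^ (2 - α - γ)) * (1 - γ))
          / ((1 - α) * (2 - α - γ) * (1 - b ^ (1 - γ))) := by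
  have hb₀ : 0 < b := hb.1
  have hs : 0 < 1 - γ := sub_pos.2 hγ.2
  have hexp : 1 - α + (1 - γ) = 2 - α - γ := by ring
  have hint := integral_rpow_gaimd_trajectory (p := 1 - α) ha.ne' hs.ne' (mul_pos hb₀ hxbar) hxbar
    (hexp ▸ hαγ)
  simp_rw [hx, intervalIntegral.integral_div, hT, hint, hexp, Real.mul_rpow hb₀.le hxbar.le,
    show xbar ^ (2 - α - γ) = xbar ^ (1 - α) * xbar ^ (1 - γ) by
      rw [← Real.rpow_add hxbar, hexp]]
  field_simp

/-- Under the threshold policy with threshold `x̄`, the time average of the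
α-fairness utility `x^(1-α)/(1-α)` over one G-AIMD cycle equals
`x̄^(1-α) (1-b^(2-α-γ))(1-γ) / ((1-α)(2-α-γ)(1-b^(1-γ)))`. -/
theorem gaimd_cycle_average_fairness
    (a γ b α xbar : ℝ) (ha : 0 < a) (hγ : γ ∈ Set.Ico (0 : ℝ) 1)
    (hb : b ∈ Set.Ioo (0 : ℝ) 1) (hα : 0 < α) (hα1 : α ≠ 1)
    (hαγ : 2 - α - γ ≠ 0) (hxbar : 0 < xbar)
    (T : ℝ) (hT : T = (xbar ^ (1 - γ) - (b * xbar) ^ (1 - γ)) / (a * (1 - γ)))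
    (x : ℝ → ℝ)
    (hx : ∀ t : ℝ, x t = ((b * xbar) ^ (1 - γ) + a * (1 - γ) * t) ^ (1 / (1 - γ))) :
    (1 / T) * ∫ t in (0 : ℝ)..T, (x t) ^ (1 - α) / (1 - α)
      = xbar ^ (1 - α) * ((1 - b ^ (2 - α - γ)) * (1 - γ))
          / ((1 - α) * (2 - α - γ) * (1 - b ^ (1 - γ))) :=
  gaimd_cycle_average_fairness_general a γ b α xbar ha hγ hb hαγ hxbar T hT x hx
end

section
/- Let b ∈ (0,1), γ ∈ [0,1], α > 0 with 2−α−γ ≠ 0. Define the index function λ : (0,∞) → ℝ by λ(x̄) = (2−γ)(1−b^{2−α−γ}) / ((1−b^{2−γ})(2−α−γ)) · x̄^{−α}. Then λ(x̄) > 0 for every x̄ > 0, and λ is strictly decreasing on (0,∞) (in particular the correspondence between the Lagrange multiplier λ and the optimal threshold x̄ in the G-AIMD problem is a monotone decreasing bijection, which establishes indexability). -/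
/-- The index function `λ(x̄) = (2-γ)(1-b^(2-α-γ)) / ((1-b^(2-γ))(2-α-γ)) · x̄^(-α)`
is positive and strictly decreasing on `(0,∞)`: the correspondence between the
Lagrange multiplier and the optimal threshold is a monotone decreasing
bijection, which establishes indexability of the G-AIMD problem. -/
theorem gaimd_index_pos_strictAnti
    (b γ α : ℝ) (hb : b ∈ Set.Ioo (0 : ℝ) 1) (hγ : γ ∈ Set.Icc (0 : ℝ) 1)
    (hα : 0 < α) (hαγ : 2 - α - γ ≠ 0)
    (lam : ℝ → ℝ)
    (hlam : ∀ xbar : ℝ, lam xbar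
      = (2 - γ) * (1 - b ^ (2 - α - γ)) / ((1 - b ^ (2 - γ)) * (2 - α - γ))
          * xbar ^ (-α)) :
    (∀ xbar : ℝ, 0 < xbar → 0 < lam xbar) ∧ StrictAntiOn lam (Set.Ioi 0) := by
  obtain ⟨hb0, hb1⟩ := hb
  obtain ⟨hγ0, hγ1⟩ := hγ
  have h2γ : 0 < 2 - γ := by linarith
  have hden1 : 0 < 1 - b ^ (2 - γ) := by
    have := Real.rpow_lt_one hb0.le hb1 h2γ
    linarith
  have hC : 0 < (2 - γ) * (1 - b ^ (2 - α - γ)) / ((1 - b ^ (2 - γ)) * (2 - α - γ)) := by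
    rcases lt_or_gt_of_ne hαγ with hs | hs
    · have hbpow : 1 < b ^ (2 - α - γ) :=
        (Real.one_lt_rpow_iff_of_pos hb0).mpr (Or.inr ⟨hb1, hs⟩)
      apply div_pos_of_neg_of_neg
      · exact mul_neg_of_pos_of_neg h2γ (by linarith)
      · exact mul_neg_of_pos_of_neg hden1 hs
    · have hbpow : b ^ (2 - α - γ) < 1 := Real.rpow_lt_one hb0.le hb1 hs
      exact div_pos (mul_pos h2γ (by linarith)) (mul_pos hden1 hs)
  constructor
  · intro x hx
    rw [hlam x]
    exact mul_pos hC (Real.rpow_pos_of_pos hx _)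
  · intro x hx y hy hxy
    rw [hlam x, hlam y]
    exact mul_lt_mul_of_pos_left
      (Real.rpow_lt_rpow_of_neg hx hxy (neg_neg_of_pos hα)) hC
end

section
/- Let N ≥ 2, c > 0, b ∈ (0,1), and set b₁ = (1−b)/N. Let x ∈ ℝ^N satisfy x₁ ≥ x₂ ≥ … ≥ x_N > 0, Σᵢ xᵢ = c, and x_N ≥ b x₁. Define y ∈ ℝ^N by yᵢ = x_{i+1} + b₁ x₁ for 1 ≤ i ≤ N−1 and y_N = b x₁ + b₁ x₁. Then y₁ ≥ y₂ ≥ … ≥ y_N > 0, Σᵢ yᵢ = c, and y_N ≥ b y₁. -/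
/-!
Since `x_N ≥ b x₁`, the reduced rate `b x₁` is the smallest coordinate, so the next ordered
vector is `x₂, …, x_N, b x₁` shifted by `b₁ x₁`. The ordering is inherited; the total loses
`(1 - b) x₁` and regains `N b₁ x₁ = (1 - b) x₁`; and as every new coordinate is at most
`(1 + b₁) x₁` while the last one is `(b + b₁) x₁`, the condition `y_N ≥ b y₁` reduces to
`b b₁ ≤ b₁`.
-/

theorem Fin.antitone_snoc {α : Type*} [Preorder α] {n : ℕ} {f : Fin n → α} {a : α}
    (hf : Antitone f) (ha : ∀ i, a ≤ f i) : Antitone (Fin.snoc f a : Fin (n + 1) → α) := by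
  intro i j hij
  induction j using Fin.lastCases with
  | last =>
    induction i using Fin.lastCases with
    | last => exact le_rfl
    | cast k => simpa only [Fin.snoc_last, Fin.snoc_castSucc] using ha k
  | cast l =>
    induction i using Fin.lastCases with
    | last => exact absurd hij (Fin.castSucc_lt_last l).not_ge
    | cast k => simpa only [Fin.snoc_castSucc] using hf (Fin.castSucc_le_castSucc_iff.mp hij)

namespace AIMD

variable {n : ℕ} (b b₁ : ℝ) (x : Fin (n + 1) → ℝ)

/-- Indices start at `0`: `x 0` is the paper's `x₁` and `x (Fin.last n)` its `x_N`. -/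
def indexStep (i : Fin (n + 1)) : ℝ :=
  (Fin.snoc (Fin.tail x) (b * x 0) : Fin (n + 1) → ℝ) i + b₁ * x 0

theorem indexStep_last : indexStep b b₁ x (Fin.last n) = (b + b₁) * x 0 := by
  rw [indexStep, Fin.snoc_last, add_mul]

theorem sum_indexStep :
    ∑ i, indexStep b b₁ x i = ∑ i, x i + (b - 1 + (n + 1) * b₁) * x 0 := by
  simp only [indexStep, Finset.sum_add_distrib, Fin.sum_snoc, Fin.sum_univ_succ x, Fin.tail,
    Finset.sum_const, Finset.card_univ, Fintype.card_fin, nsmul_eq_mul]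
  push_cast
  ring

variable {b x}

theorem antitone_indexStep (hx : Antitone x) (hmin : b * x 0 ≤ x (Fin.last n)) :
    Antitone (indexStep b b₁ x) := by
  refine (Fin.antitone_snoc (hx.comp_monotone Fin.strictMono_succ.monotone) fun i => ?_).add_const _
  exact hmin.trans (hx (Fin.le_last _))

theorem indexStep_le (hx : Antitone x) (hb : b ≤ 1) (hx0 : 0 ≤ x 0) (i : Fin (n + 1)) :
    indexStep b b₁ x i ≤ (1 + b₁) * x 0 := by
  have : (Fin.snoc (Fin.tail x) (b * x 0) : Fin (n + 1) → ℝ) i ≤ x 0 := by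
    induction i using Fin.lastCases with
    | last => simpa only [Fin.snoc_last] using mul_le_of_le_one_left hx0 hb
    | cast k => rw [Fin.snoc_castSucc]; exact hx (Fin.zero_le _)
  rw [indexStep]
  linarith

end AIMD

open AIMD in
/-- For homogeneous AIMD users under the index (reduce-the-maximum) policy, the
region where the reduced rate becomes the minimal rate is invariant: if the
ordered rate vector `x` satisfies `x₁ ≥ … ≥ x_N > 0`, `∑ xᵢ = c` and
`x_N ≥ b x₁`, then the next ordered rate vector `y` (obtained by reducing `x₁`
to `b x₁` and adding `b₁ x₁ = (1-b)x₁/N` to every coordinate) is again ordered,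
positive, sums to `c`, and satisfies `y_N ≥ b y₁`. -/
theorem aimd_index_region_invariant
    (N : ℕ) (hN : 2 ≤ N) (c b : ℝ) (hb : b ∈ Set.Ioo (0 : ℝ) 1)
    (b₁ : ℝ) (hb₁ : b₁ = (1 - b) / N)
    (x : Fin N → ℝ)
    (hord : ∀ i j : Fin N, i ≤ j → x j ≤ x i)
    (hpos : ∀ i, 0 < x i)
    (hsum : ∑ i, x i = c)
    (hmin : b * x ⟨0, by omega⟩ ≤ x ⟨N - 1, by omega⟩)
    (y : Fin N → ℝ)
    (hy : ∀ i : Fin N, y i =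
      if h : (i : ℕ) + 1 < N then x ⟨(i : ℕ) + 1, h⟩ + b₁ * x ⟨0, by omega⟩
      else b * x ⟨0, by omega⟩ + b₁ * x ⟨0, by omega⟩) :
    (∀ i j : Fin N, i ≤ j → y j ≤ y i)
    ∧ (∀ i, 0 < y i)
    ∧ ∑ i, y i = c
    ∧ b * y ⟨0, by omega⟩ ≤ y ⟨N - 1, by omega⟩ := by
  obtain ⟨hb0, hb1⟩ := hb
  obtain ⟨n, rfl⟩ : ∃ n, N = n + 1 := ⟨N - 1, by omega⟩
  have hx0 : 0 < x 0 := hpos 0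
  have hb₁0 : 0 < b₁ := hb₁ ▸ div_pos (by linarith) (by positivity)
  have hNb₁ : (n + 1) * b₁ = 1 - b := by
    rw [hb₁]; push_cast; field_simp
  have hyx : y = indexStep b b₁ x := funext fun i => by
    rw [hy]
    induction i using Fin.lastCases with
    | last => simp [indexStep]
    | cast k => rw [dif_pos (by simp), indexStep, Fin.snoc_castSucc]; rfl
  subst hyx
  have hanti : Antitone (indexStep b b₁ x) := antitone_indexStep b₁ hord hmin
  have hlast := indexStep_last b b₁ x
  refine ⟨hanti, fun i => ?_, ?_, ?_⟩
  · calc 0 < (b + b₁) * x 0 := by positivity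
      _ = indexStep b b₁ x (Fin.last n) := hlast.symm
      _ ≤ indexStep b b₁ x i := hanti (Fin.le_last i)
  · rw [sum_indexStep, hsum, hNb₁]; ring
  · calc b * indexStep b b₁ x 0 ≤ b * ((1 + b₁) * x 0) :=
          mul_le_mul_of_nonneg_left (indexStep_le b₁ hord hb1.le hx0.le 0) hb0.le
      _ ≤ (b + b₁) * x 0 := by nlinarith [mul_pos (mul_pos (sub_pos.2 hb1) hb₁0) hx0]
      _ = indexStep b b₁ x (Fin.last n) := hlast.symm
end

section
/- Let N ≥ 2, c > 0, b ∈ (0,1), and b₁ = (1−b)/N. Let A be the N×N real matrix whose first column is (b₁, …, b₁, b₁+b)ᵀ, with A_{i,i+1} = 1 for 1 ≤ i ≤ N−1 and all other entries 0. If x ∈ ℝ^N satisfies A x = x and Σₙ xₙ = c, then x = x*, where x*_n = (b + (N−n+1)(1−b)/N) · c / (Nb + (N+1)(1−b)/2). -/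
/-!
Row by row, `A x = x` says `xᵢ = αᵢ x₀ + xᵢ₊₁` (with `x_N = 0`) for the first column `α`
of `A`, so `xᵢ` is `x₀` times the tail sum `b + (N - i) b₁` of `α`. Summing over `i` gives
`c = (N b + (N + 1)(1 - b)/2) x₀`, which determines `x₀` and hence `x`.
-/

open Finset Matrix

def firstColumnShift {R : Type*} [Zero R] [One R] (N : ℕ) (α : ℕ → R) :
    Matrix (Fin N) (Fin N) R :=
  Matrix.of fun i j => if (j : ℕ) = 0 then α i else if (j : ℕ) = i + 1 then 1 else 0

lemma eq_sum_Ico_of_eq_add_succ {M : Type*} [AddCommMonoid M] {y a : ℕ → M} {n : ℕ}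
    (hn : y n = 0) (h : ∀ k < n, y k = a k + y (k + 1)) {k : ℕ} (hk : k ≤ n) :
    y k = ∑ j ∈ Ico k n, a j := by
  induction hk using Nat.decreasingInduction with
  | self => simp [hn]
  | of_succ k hk ih => rw [h k hk, ih, sum_eq_sum_Ico_succ_bot hk]

section
variable {R : Type*} [Semiring R] {N : ℕ}

-- `Function.extend Fin.val x 0` is `x` extended by zero to `ℕ`, so that the last row of
-- `firstColumnShift` needs no special case.
lemma extend_val_of_le (x : Fin N → R) {k : ℕ} (hk : N ≤ k) :
    Function.extend Fin.val x 0 k = 0 :=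
  Function.extend_apply' _ _ _ (by rintro ⟨j, rfl⟩; exact absurd j.isLt (by omega))

lemma firstColumnShift_mulVec_apply (α : ℕ → R) (x : Fin N → R) (i : Fin N) :
    (firstColumnShift N α *ᵥ x) i =
      α i * Function.extend Fin.val x 0 0 + Function.extend Fin.val x 0 (i + 1) := by
  set y := Function.extend Fin.val x 0
  have hy (j : Fin N) : x j = y j := (Fin.val_injective.extend_apply x 0 j).symm
  have hentry (k : ℕ) : (if k = 0 then α i else if k = i + 1 then 1 else 0) * y k =
      (if k = 0 then α i * y 0 else 0) + (if k = i + 1 then y (i + 1) else 0) := by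
    split_ifs <;> simp_all
  simp only [mulVec, dotProduct, firstColumnShift, of_apply, hy]
  rw [Fin.sum_univ_eq_sum_range
      (fun k => (if k = 0 then α i else if k = i + 1 then 1 else 0) * y k),
    sum_congr rfl fun k _ => hentry k, sum_add_distrib, sum_ite_eq', sum_ite_eq',
    if_pos (mem_range.2 i.pos)]
  split_ifs with h
  · rfl
  · rw [show y (i + 1) = 0 from extend_val_of_le x (not_lt.1 (mt mem_range.2 h)), add_zero]

lemma eq_sum_Ico_mul_of_firstColumnShift_mulVec_eq {α : ℕ → R} {x : Fin N → R}
    (hx : firstColumnShift N α *ᵥ x = x) (i : Fin N) :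
    x i = (∑ j ∈ Ico (i : ℕ) N, α j) * Function.extend Fin.val x 0 0 := by
  set y := Function.extend Fin.val x 0
  have hrec (k : ℕ) (hk : k < N) : y k = α k * y 0 + y (k + 1) := by
    have := congrFun hx ⟨k, hk⟩
    rwa [firstColumnShift_mulVec_apply, ← Fin.val_injective.extend_apply x 0, eq_comm] at this
  rw [sum_mul, ← eq_sum_Ico_of_eq_add_succ (extend_val_of_le x le_rfl) hrec i.isLt.le]
  exact (Fin.val_injective.extend_apply x 0 i).symm
end

def aimdColumn (N : ℕ) (b₁ b : ℝ) (k : ℕ) : ℝ :=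
  if k = N - 1 then b₁ + b else b₁

lemma sum_Ico_aimdColumn {N k : ℕ} (b₁ b : ℝ) (hk : k < N) :
    ∑ j ∈ Ico k N, aimdColumn N b₁ b j = b + (N - k) * b₁ := by
  have hcol (j : ℕ) : aimdColumn N b₁ b j = b₁ + if j = N - 1 then b else 0 := by
    unfold aimdColumn; split_ifs <;> ring
  rw [sum_congr rfl fun j _ => hcol j, sum_add_distrib, sum_const, Nat.card_Ico, sum_ite_eq',
    if_pos (mem_Ico.2 ⟨by omega, by omega⟩), nsmul_eq_mul, Nat.cast_sub hk.le]
  ring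

lemma sum_range_natCast_sub (N : ℕ) : ∑ k ∈ range N, ((N : ℝ) - k) = N * (N + 1) / 2 := by
  induction N with
  | zero => simp
  | succ n ih =>
    rw [sum_range_succ']
    push_cast
    simp only [add_sub_add_right_eq_sub, ih]
    ring

theorem aimd_fixed_point_unique_general
    (N : ℕ) (c b : ℝ) (hb : b ∈ Set.Ioo (0 : ℝ) 1)
    (b₁ : ℝ) (hb₁ : b₁ = (1 - b) / N)
    (A : Matrix (Fin N) (Fin N) ℝ)
    (hA : ∀ i j : Fin N, A i j =
      if (j : ℕ) = 0 then (if (i : ℕ) = N - 1 then b₁ + b else b₁)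
      else if (j : ℕ) = (i : ℕ) + 1 then 1 else 0)
    (xstar : Fin N → ℝ)
    (hxstar : ∀ i : Fin N, xstar i =
      (b + ((N : ℝ) - (i : ℕ)) * (1 - b) / N) * c
        / ((N : ℝ) * b + ((N : ℝ) + 1) * (1 - b) / 2))
    (x : Fin N → ℝ) (hfix : A.mulVec x = x) (hsum : ∑ i, x i = c) :
    x = xstar := by
  have hA' : A = firstColumnShift N (aimdColumn N b₁ b) := by
    ext i j; rw [hA]; rfl
  subst hA'
  set x₀ := Function.extend Fin.val x 0 0
  have hx (i : Fin N) : x i = (b + (N - i) * b₁) * x₀ := by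
    rw [eq_sum_Ico_mul_of_firstColumnShift_mulVec_eq hfix i, sum_Ico_aimdColumn b₁ b i.isLt]
  funext i
  have hN : (N : ℝ) ≠ 0 := by have := i.pos; positivity
  have hD : 0 < (N : ℝ) * b + ((N : ℝ) + 1) * (1 - b) / 2 := by nlinarith [hb.1, hb.2]
  have hx₀ : ((N : ℝ) * b + ((N : ℝ) + 1) * (1 - b) / 2) * x₀ = c := by
    rw [← hsum, sum_congr rfl fun i _ => hx i,
      Fin.sum_univ_eq_sum_range (fun k => (b + (N - k) * b₁) * x₀) N, ← sum_mul,
      sum_add_distrib, sum_const, card_range, nsmul_eq_mul, ← sum_mul, sum_range_natCast_sub, hb₁]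
    field_simp
  rw [hx, hxstar, eq_div_iff hD.ne', ← hx₀, hb₁]
  field_simp

/-- Uniqueness of the fixed point of the AIMD index-policy dynamics: any vector
`x` with `A x = x` and coordinate sum `c` equals the explicit vector `x*` with
`x*_n = (b + (N-n+1)(1-b)/N) · c / (Nb + (N+1)(1-b)/2)`.  (Coordinates are
indexed by `Fin N`, the coordinate `i` corresponding to `n = i + 1`.) -/
theorem aimd_fixed_point_unique
    (N : ℕ) (hN : 2 ≤ N) (c b : ℝ) (hc : 0 < c) (hb : b ∈ Set.Ioo (0 : ℝ) 1)
    (b₁ : ℝ) (hb₁ : b₁ = (1 - b) / N)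
    (A : Matrix (Fin N) (Fin N) ℝ)
    (hA : ∀ i j : Fin N, A i j =
      if (j : ℕ) = 0 then (if (i : ℕ) = N - 1 then b₁ + b else b₁)
      else if (j : ℕ) = (i : ℕ) + 1 then 1 else 0)
    (xstar : Fin N → ℝ)
    (hxstar : ∀ i : Fin N, xstar i =
      (b + ((N : ℝ) - (i : ℕ)) * (1 - b) / N) * c
        / ((N : ℝ) * b + ((N : ℝ) + 1) * (1 - b) / 2))
    (x : Fin N → ℝ) (hfix : A.mulVec x = x) (hsum : ∑ i, x i = c) :
    x = xstar :=
  aimd_fixed_point_unique_general N c b hb b₁ hb₁ A hA xstar hxstar x hfix hsum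
end

section
/- Let N ≥ 2, c > 0, b ∈ (0,1), and b₁ = (1−b)/N. Let A be the N×N real matrix whose first column is (b₁, …, b₁, b₁+b)ᵀ, with A_{i,i+1} = 1 for 1 ≤ i ≤ N−1 and all other entries 0, and let x*_n = (b + (N−n+1)(1−b)/N) · c / (Nb + (N+1)(1−b)/2). Then for every x ∈ ℝ^N with Σₙ xₙ = c, the iterates A^m x converge to x* as m → ∞. -/
/-!
Every column of `A` sums to one, so `A` preserves coordinate sums and `x - x*` stays in the
hyperplane `∑ v = 0`. The first column of `A` is positive and its superdiagonal is one, so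
`A ^ N` is entrywise positive, say with entries `≥ δ > 0`. On the hyperplane `∑ v = 0` a
column-stochastic matrix with entries `≥ δ` contracts the `ℓ¹` norm by the factor
`1 - N δ < 1` (Dobrushin's coefficient), while `A` itself does not expand it. Hence
`‖Aᵐ (x - x*)‖₁ ≤ (1 - N δ) ^ ⌊m / N⌋ ‖x - x*‖₁ → 0`, and `x*` is a fixed point of `A`
with coordinate sum `c`.
-/

open Filter Finset Topology Matrix

namespace Matrix

variable {n : Type*} [Fintype n]

theorem sum_abs_mulVec_le_of_le_apply {M : Matrix n n ℝ} {δ : ℝ} (hδ : ∀ i j, δ ≤ M i j)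
    (hM : ∀ j, ∑ i, M i j = 1) {v : n → ℝ} (hv : ∑ j, v j = 0) :
    ∑ i, |(M *ᵥ v) i| ≤ (1 - Fintype.card n * δ) * ∑ j, |v j| := by
  -- as `∑ v = 0`, lowering every entry of `M` by `δ` does not change `M *ᵥ v`
  have shift : ∀ i, (M *ᵥ v) i = ∑ j, (M i j - δ) * v j := by
    simp [mulVec, dotProduct, sub_mul, sum_sub_distrib, ← mul_sum, hv]
  calc ∑ i, |(M *ᵥ v) i| ≤ ∑ i, ∑ j, (M i j - δ) * |v j| := by
        refine sum_le_sum fun i _ => ?_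
        rw [shift]
        refine (abs_sum_le_sum_abs _ _).trans_eq (sum_congr rfl fun j _ => ?_)
        rw [abs_mul, abs_of_nonneg (sub_nonneg.2 (hδ i j))]
    _ = (1 - Fintype.card n * δ) * ∑ j, |v j| := by
        rw [sum_comm, mul_sum]
        simp [← sum_mul, sum_sub_distrib, hM]

variable [DecidableEq n]

theorem pow_add_apply_pos {M : Matrix n n ℝ}
    (hM : ∀ i j, 0 ≤ M i j) {a b : ℕ} {i j l : n} (ha : 0 < (M ^ a) i j)
    (hb : 0 < (M ^ b) j l) : 0 < (M ^ (a + b)) i l := by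
  rw [pow_add, mul_apply]
  exact (mul_pos ha hb).trans_le <| single_le_sum (f := fun k => (M ^ a) i k * (M ^ b) k l)
    (fun k _ => mul_nonneg (pow_apply_nonneg hM a i k) (pow_apply_nonneg hM b k l)) (mem_univ j)

theorem sum_abs_pow_mulVec_le_of_contraction {M : Matrix n n ℝ} (hM : M ∈ colStochastic ℝ n)
    {k : ℕ} {γ : ℝ} (hγ : 0 ≤ γ)
    (hk : ∀ v : n → ℝ, ∑ i, v i = 0 → ∑ i, |(M ^ k *ᵥ v) i| ≤ γ * ∑ i, |v i|)
    (m : ℕ) {v : n → ℝ} (hv : ∑ i, v i = 0) :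
    ∑ i, |(M ^ m *ᵥ v) i| ≤ γ ^ (m / k) * ∑ i, |v i| := by
  have hpow : ∀ q : ℕ, ∑ i, |((M ^ k) ^ q *ᵥ v) i| ≤ γ ^ q * ∑ i, |v i| := by
    intro q
    induction q with
    | zero => simp
    | succ q ih =>
      rw [pow_succ', ← mulVec_mulVec, pow_succ', mul_assoc]
      refine (hk _ ?_).trans (mul_le_mul_of_nonneg_left ih hγ)
      rw [sum_mulVec_of_mem_colStochastic (pow_mem (pow_mem hM k) q), hv]
  have hr := pow_mem hM (m % k)
  calc ∑ i, |(M ^ m *ᵥ v) i|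
      = ∑ i, |(M ^ (m % k) *ᵥ ((M ^ k) ^ (m / k) *ᵥ v)) i| := by
        rw [mulVec_mulVec, ← pow_mul, ← pow_add, Nat.mod_add_div]
    _ ≤ (1 - Fintype.card n * 0) * ∑ i, |((M ^ k) ^ (m / k) *ᵥ v) i| :=
        sum_abs_mulVec_le_of_le_apply (fun _ _ => hr.1 _ _) (sum_col_of_mem_colStochastic hr)
          (by rw [sum_mulVec_of_mem_colStochastic (pow_mem (pow_mem hM k) _), hv])
    _ ≤ γ ^ (m / k) * ∑ i, |v i| := by simpa using hpow (m / k)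

theorem IsPrimitive.exists_contraction [Nonempty n] {M : Matrix n n ℝ} (hprim : M.IsPrimitive)
    (hM : M ∈ colStochastic ℝ n) :
    ∃ k ≠ 0, ∃ γ < 1, 0 ≤ γ ∧
      ∀ v : n → ℝ, ∑ i, v i = 0 → ∑ i, |(M ^ k *ᵥ v) i| ≤ γ * ∑ i, |v i| := by
  obtain ⟨k, hk, hpos⟩ := hprim.exists_pos_pow
  obtain ⟨p, -, hp⟩ := exists_min_image univ (fun p : n × n => (M ^ k) p.1 p.2) univ_nonempty
  have hMk := pow_mem hM k
  refine ⟨k, hk.ne', 1 - Fintype.card n * (M ^ k) p.1 p.2, ?_, ?_, fun v hv =>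
    sum_abs_mulVec_le_of_le_apply (fun i j => hp (i, j) (mem_univ _))
      (sum_col_of_mem_colStochastic hMk) hv⟩
  · have := hpos p.1 p.2
    have : (0 : ℝ) < Fintype.card n := by exact_mod_cast Fintype.card_pos
    nlinarith
  · rw [sub_nonneg, ← sum_col_of_mem_colStochastic hMk p.2, ← nsmul_eq_mul, ← card_univ,
      ← sum_const]
    exact sum_le_sum fun i _ => hp (i, p.2) (mem_univ _)

theorem pow_mulVec_eq_self {M : Matrix n n ℝ} {y : n → ℝ} (hy : M *ᵥ y = y) (m : ℕ) :
    M ^ m *ᵥ y = y := by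
  induction m with
  | zero => simp
  | succ m ih => rw [pow_succ, ← mulVec_mulVec, hy, ih]

theorem IsPrimitive.tendsto_pow_mulVec {M : Matrix n n ℝ} (hprim : M.IsPrimitive)
    (hM : M ∈ colStochastic ℝ n) {x y : n → ℝ} (hy : M *ᵥ y = y)
    (hxy : ∑ i, x i = ∑ i, y i) :
    Tendsto (fun m => M ^ m *ᵥ x) atTop (𝓝 y) := by
  cases isEmpty_or_nonempty n
  · exact tendsto_pi_nhds.2 isEmptyElim
  obtain ⟨k, hk, γ, hγ1, hγ0, hcontr⟩ := hprim.exists_contraction hM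
  have he : ∑ i, (x - y) i = 0 := by simp [sum_sub_distrib, hxy]
  have hgeom : Tendsto (fun m => γ ^ (m / k) * ∑ i, |(x - y) i|) atTop (𝓝 0) := by
    simpa using ((tendsto_pow_atTop_nhds_zero_of_lt_one hγ0 hγ1).comp
      (Nat.tendsto_div_const_atTop hk)).mul_const (∑ i, |(x - y) i|)
  have hdecay : Tendsto (fun m => M ^ m *ᵥ (x - y)) atTop (𝓝 0) := by
    refine squeeze_zero_norm (fun m => ?_) hgeom
    calc ‖M ^ m *ᵥ (x - y)‖ ≤ ∑ i, |(M ^ m *ᵥ (x - y)) i| :=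
          (pi_norm_le_iff_of_nonneg (by positivity)).2 fun i =>
            single_le_sum (f := fun i => |(M ^ m *ᵥ (x - y)) i|) (fun i _ => abs_nonneg _)
              (mem_univ i)
      _ ≤ γ ^ (m / k) * ∑ i, |(x - y) i| :=
          sum_abs_pow_mulVec_le_of_contraction hM hγ0 hcontr m he
  simpa [mulVec_sub, pow_mulVec_eq_self hy] using hdecay.add_const y

end Matrix

noncomputable def aimdMatrix (N : ℕ) (b : ℝ) : Matrix (Fin N) (Fin N) ℝ := fun i j =>
  if (j : ℕ) = 0 then (if (i : ℕ) = N - 1 then (1 - b) / N + b else (1 - b) / N)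
  else if (j : ℕ) = (i : ℕ) + 1 then 1 else 0

noncomputable def aimdFixedPoint (N : ℕ) (b c : ℝ) : Fin N → ℝ := fun i =>
  (b + ((N : ℝ) - (i : ℕ)) * (1 - b) / N) * c / ((N : ℝ) * b + ((N : ℝ) + 1) * (1 - b) / 2)

section AIMD

variable {N : ℕ} {b : ℝ}

theorem aimdMatrix_apply_col_zero (i : Fin N) :
    aimdMatrix N b i ⟨0, i.pos⟩ = (1 - b) / N + if (i : ℕ) = N - 1 then b else 0 := by
  simp only [aimdMatrix, if_true]
  split_ifs <;> simp

theorem aimdMatrix_apply_of_eq_succ {i j : Fin N} (h : (j : ℕ) = i + 1) :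
    aimdMatrix N b i j = 1 := by
  simp [aimdMatrix, h]

theorem aimdMatrix_apply_of_ne {i j : Fin N} (h₀ : (j : ℕ) ≠ 0) (h₁ : (j : ℕ) ≠ i + 1) :
    aimdMatrix N b i j = 0 := by
  simp [aimdMatrix, h₀, h₁]

theorem aimdMatrix_apply_col_zero_pos (hb₀ : 0 ≤ b) (hb₁ : b < 1) (i : Fin N) :
    0 < aimdMatrix N b i ⟨0, i.pos⟩ := by
  have : (0 : ℝ) < N := by exact_mod_cast i.pos
  rw [aimdMatrix_apply_col_zero]
  split_ifs <;> positivity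

theorem aimdMatrix_nonneg (hb₀ : 0 ≤ b) (hb₁ : b ≤ 1) (i j : Fin N) :
    0 ≤ aimdMatrix N b i j := by
  by_cases h₀ : (j : ℕ) = 0
  · obtain rfl : j = ⟨0, i.pos⟩ := Fin.ext h₀
    rw [aimdMatrix_apply_col_zero]
    split_ifs <;> positivity
  by_cases h₁ : (j : ℕ) = i + 1
  · rw [aimdMatrix_apply_of_eq_succ h₁]; exact zero_le_one
  · rw [aimdMatrix_apply_of_ne h₀ h₁]

theorem sum_aimdMatrix_col (j : Fin N) : ∑ i, aimdMatrix N b i j = 1 := by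
  by_cases h₀ : (j : ℕ) = 0
  · have hN := j.pos
    obtain rfl : j = ⟨0, hN⟩ := Fin.ext h₀
    have hlast : ∑ i : Fin N, (if (i : ℕ) = N - 1 then b else 0) = b := by
      rw [Fintype.sum_eq_single ⟨N - 1, by omega⟩ fun i hi => if_neg fun h => hi (Fin.ext h)]
      simp
    simp_rw [aimdMatrix_apply_col_zero, sum_add_distrib, hlast, sum_const, card_univ,
      Fintype.card_fin, nsmul_eq_mul]
    field_simp
    ring
  · rw [Fintype.sum_eq_single ⟨j - 1, by omega⟩ fun i hi => aimdMatrix_apply_of_ne h₀ ?_,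
      aimdMatrix_apply_of_eq_succ (by simp; omega)]
    exact fun h => hi (Fin.ext (by simp; omega))

theorem aimdMatrix_mem_colStochastic (hb₀ : 0 ≤ b) (hb₁ : b ≤ 1) :
    aimdMatrix N b ∈ colStochastic ℝ (Fin N) :=
  mem_colStochastic_iff_sum.2 ⟨aimdMatrix_nonneg hb₀ hb₁, sum_aimdMatrix_col⟩

theorem aimdMatrix_mulVec_apply (v : Fin N → ℝ) (i : Fin N) :
    (aimdMatrix N b *ᵥ v) i = aimdMatrix N b i ⟨0, i.pos⟩ * v ⟨0, i.pos⟩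
      + if h : (i : ℕ) + 1 < N then v ⟨i + 1, h⟩ else 0 := by
  simp only [mulVec, dotProduct]
  split_ifs with h
  · rw [Fintype.sum_eq_add ⟨0, i.pos⟩ ⟨i + 1, h⟩ (by simp) fun j hj => ?_,
      aimdMatrix_apply_of_eq_succ (j := ⟨i + 1, h⟩) rfl, one_mul]
    rw [aimdMatrix_apply_of_ne (fun h => hj.1 (Fin.ext h)) (fun h => hj.2 (Fin.ext h)), zero_mul]
  · rw [Fintype.sum_eq_single ⟨0, i.pos⟩ fun j hj => ?_, add_zero]
    rw [aimdMatrix_apply_of_ne (fun h => hj (Fin.ext h)) (by omega), zero_mul]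

theorem aimdMatrix_mulVec_aimdFixedPoint (c : ℝ) :
    aimdMatrix N b *ᵥ aimdFixedPoint N b c = aimdFixedPoint N b c := by
  funext i
  have hN : (N : ℝ) ≠ 0 := by exact_mod_cast i.pos.ne'
  rw [aimdMatrix_mulVec_apply, aimdMatrix_apply_col_zero]
  split_ifs with hlast hnext hnext
  · omega
  · have : ((i : ℕ) : ℝ) = N - 1 := by rw [hlast, Nat.cast_pred i.pos]
    simp only [aimdFixedPoint, this, Nat.cast_zero]
    field_simp
    ring
  · simp only [aimdFixedPoint]
    push_cast
    field_simp
    ring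
  · omega

theorem sum_aimdFixedPoint (hN : N ≠ 0) (hb₀ : 0 ≤ b) (hb₁ : b ≤ 1) (c : ℝ) :
    ∑ i, aimdFixedPoint N b c i = c := by
  have hN' : (N : ℝ) ≠ 0 := by exact_mod_cast hN
  have hD : 0 < (N : ℝ) * b + ((N : ℝ) + 1) * (1 - b) / 2 := by
    have : (0 : ℝ) < N := by positivity
    nlinarith
  have hgauss : (∑ i : Fin N, ((i : ℕ) : ℝ)) * 2 = N * (N - 1) := by
    rw [Fin.sum_univ_eq_sum_range (fun i => (i : ℝ)), ← Nat.cast_sum, ← Nat.cast_ofNat,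
      ← Nat.cast_mul, sum_range_id_mul_two, Nat.cast_mul, Nat.cast_pred (Nat.pos_of_ne_zero hN)]
  have hweights : ∑ i : Fin N, (b + ((N : ℝ) - (i : ℕ)) * (1 - b) / N)
      = (N : ℝ) * b + ((N : ℝ) + 1) * (1 - b) / 2 := by
    simp only [sum_add_distrib, ← sum_div, ← sum_mul, sum_sub_distrib, sum_const, card_univ,
      Fintype.card_fin, nsmul_eq_mul]
    field_simp
    linear_combination (b - 1) * hgauss
  simp only [aimdFixedPoint, ← sum_div, ← sum_mul, hweights]
  exact mul_div_cancel_left₀ c hD.ne'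

theorem isPrimitive_aimdMatrix (hN : N ≠ 0) (hb₀ : 0 ≤ b) (hb₁ : b < 1) :
    (aimdMatrix N b).IsPrimitive := by
  have hnn := aimdMatrix_nonneg (N := N) hb₀ hb₁.le
  refine ⟨hnn, N, Nat.pos_of_ne_zero hN, fun i j => ?_⟩
  set z : Fin N := ⟨0, i.pos⟩
  have hcol (k : Fin N) : 0 < (aimdMatrix N b ^ 1) k z := by
    simpa using aimdMatrix_apply_col_zero_pos hb₀ hb₁ k
  have hloop (m : ℕ) : 0 < (aimdMatrix N b ^ m) z z := by
    induction m with
    | zero => simp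
    | succ m ih => exact pow_add_apply_pos hnn ih (hcol z)
  have hclimb (l : ℕ) (hl : l < N) : 0 < (aimdMatrix N b ^ l) z ⟨l, hl⟩ := by
    induction l with
    | zero => simp [z]
    | succ l ih =>
      refine pow_add_apply_pos hnn (ih (by omega)) ?_
      rw [pow_one, aimdMatrix_apply_of_eq_succ rfl]
      exact one_pos
  -- the walk `i → 0`, then `N - 1 - j` loops at `0`, then `0 → 1 → ⋯ → j` has length `N`
  have := pow_add_apply_pos hnn (pow_add_apply_pos hnn (hcol i) (hloop (N - 1 - j)))
    (hclimb j j.isLt)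
  rwa [show 1 + (N - 1 - j) + j = N by omega] at this

end AIMD

theorem aimd_global_convergence_general
    (N : ℕ) (hN : 2 ≤ N) (c b : ℝ) (hb : b ∈ Set.Ioo (0 : ℝ) 1)
    (b₁ : ℝ) (hb₁ : b₁ = (1 - b) / N)
    (A : Matrix (Fin N) (Fin N) ℝ)
    (hA : ∀ i j : Fin N, A i j =
      if (j : ℕ) = 0 then (if (i : ℕ) = N - 1 then b₁ + b else b₁)
      else if (j : ℕ) = (i : ℕ) + 1 then 1 else 0)
    (xstar : Fin N → ℝ)
    (hxstar : ∀ i : Fin N, xstar i =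
      (b + ((N : ℝ) - (i : ℕ)) * (1 - b) / N) * c
        / ((N : ℝ) * b + ((N : ℝ) + 1) * (1 - b) / 2))
    (x : Fin N → ℝ) (hsum : ∑ i, x i = c) :
    Filter.Tendsto (fun m : ℕ => (A ^ m).mulVec x) Filter.atTop (nhds xstar) := by
  subst hb₁
  obtain rfl : A = aimdMatrix N b := Matrix.ext hA
  obtain rfl : xstar = aimdFixedPoint N b c := funext hxstar
  have hN₀ : N ≠ 0 := by omega
  exact (isPrimitive_aimdMatrix hN₀ hb.1.le hb.2).tendsto_pow_mulVec
    (aimdMatrix_mem_colStochastic hb.1.le hb.2.le) (aimdMatrix_mulVec_aimdFixedPoint c)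
    (hsum.trans (sum_aimdFixedPoint hN₀ hb.1.le hb.2.le c).symm)

/-- Global stability of the AIMD dynamics under the index policy: for every
initial vector `x` with coordinate sum `c`, the iterates `Aᵐ x` converge, as
`m → ∞`, to the fixed point `x*` with
`x*_n = (b + (N-n+1)(1-b)/N) · c / (Nb + (N+1)(1-b)/2)`. -/
theorem aimd_global_convergence
    (N : ℕ) (hN : 2 ≤ N) (c b : ℝ) (hc : 0 < c) (hb : b ∈ Set.Ioo (0 : ℝ) 1)
    (b₁ : ℝ) (hb₁ : b₁ = (1 - b) / N)
    (A : Matrix (Fin N) (Fin N) ℝ)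
    (hA : ∀ i j : Fin N, A i j =
      if (j : ℕ) = 0 then (if (i : ℕ) = N - 1 then b₁ + b else b₁)
      else if (j : ℕ) = (i : ℕ) + 1 then 1 else 0)
    (xstar : Fin N → ℝ)
    (hxstar : ∀ i : Fin N, xstar i =
      (b + ((N : ℝ) - (i : ℕ)) * (1 - b) / N) * c
        / ((N : ℝ) * b + ((N : ℝ) + 1) * (1 - b) / 2))
    (x : Fin N → ℝ) (hsum : ∑ i, x i = c) :
    Filter.Tendsto (fun m : ℕ => (A ^ m).mulVec x) Filter.atTop (nhds xstar) :=
  aimd_global_convergence_general N hN c b hb b₁ hb₁ A hA xstar hxstar x hsum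
end
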